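/- For an ergodic Markov chain P with stationary distribution π, any initial configuration μ^{(0)} with total mass k, any vertex w, and any T > 0: |Σ_{t=0}^{T−1} (μ^{(0)} P^t)_w − k T π_w| ≤ (3/2) k t*, where t* = τ(1/4). -/

import Mathlib

/-!
Write `D_t(u) = ∑_v |P^t(u,v) - π(v)|`. Since `(P^s_u - π)` has total mass zero, it may be shifted
by any row vector `c` before multiplying by `P^t`, which gives
`D_{s+t}(u) ≤ D_s(u) · max_x ∑_w |P^t(x,w) - c(w)|`. With `c = δπ` for a Doeblin minorization of
`P^{t₀}` this shows `D_t → 0`, so the mixing time `t*` is well defined; with `c = π` it gives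
`D_{s+t*} ≤ D_s / 2`. Hence `∑_{t<T} D_t ≤ 2t* + 2 · t* · ½ = 3t*`, and the bound follows from
`|P^t(u,w) - π(w)| ≤ D_t(u)/2` after averaging over the initial mass `μ⁽⁰⁾`.
-/

open Finset Matrix

lemma abs_le_half_sum_abs_of_sum_eq_zero {ι : Type*} [Fintype ι] [DecidableEq ι] {d : ι → ℝ}
    (hd : ∑ i, d i = 0) (j : ι) : |d j| ≤ (∑ i, |d i|) / 2 := by
  have hrest : d j = -∑ i ∈ univ.erase j, d i := by
    rw [← add_sum_erase univ d (mem_univ j)] at hd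
    linarith
  have hle : |d j| ≤ ∑ i ∈ univ.erase j, |d i| := by
    rw [hrest, abs_neg]
    exact abs_sum_le_sum_abs _ _
  have hsplit := add_sum_erase univ (fun i => |d i|) (mem_univ j)
  linarith

lemma sum_abs_vecMul_le_of_sum_eq_zero {ι κ : Type*} [Fintype ι] [Fintype κ] {d : ι → ℝ}
    (hd : ∑ i, d i = 0) (B : Matrix ι κ ℝ) (c : κ → ℝ) {r : ℝ}
    (hB : ∀ i, ∑ j, |B i j - c j| ≤ r) : ∑ j, |(d ᵥ* B) j| ≤ r * ∑ i, |d i| := by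
  have hshift : ∀ j, (d ᵥ* B) j = ∑ i, d i * (B i j - c j) := fun j => by
    simp only [vecMul, dotProduct, mul_sub, sum_sub_distrib, ← sum_mul, hd, zero_mul, sub_zero]
  calc ∑ j, |(d ᵥ* B) j| ≤ ∑ j, ∑ i, |d i| * |B i j - c j| := by
        gcongr with j
        rw [hshift]
        refine (abs_sum_le_sum_abs _ _).trans_eq ?_
        simp only [abs_mul]
    _ = ∑ i, |d i| * ∑ j, |B i j - c j| := by
        rw [sum_comm]
        simp only [mul_sum]
    _ ≤ ∑ i, |d i| * r := by gcongr with i; exact hB i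
    _ = r * ∑ i, |d i| := by rw [← sum_mul, mul_comm]

lemma sum_range_le_of_add_le_half {a : ℕ → ℝ} {τ : ℕ} {M : ℝ} (ha : ∀ t, 0 ≤ a t)
    (hM : ∀ t < τ, a t ≤ M) (hhalf : ∀ t, a (τ + t) ≤ a t / 2) (T : ℕ) :
    ∑ t ∈ range T, a t ≤ 2 * τ * M := by
  have hhead : ∑ t ∈ range τ, a t ≤ τ * M := by
    simpa using sum_le_card_nsmul (range τ) a M fun t ht => hM t (mem_range.1 ht)
  have htail : ∑ t ∈ range T, a (τ + t) ≤ (∑ t ∈ range T, a t) / 2 := by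
    rw [sum_div]
    exact sum_le_sum fun t _ => hhalf t
  have hmono : ∑ t ∈ range T, a t ≤ ∑ t ∈ range (τ + T), a t :=
    sum_le_sum_of_subset_of_nonneg (range_mono (Nat.le_add_left T τ)) fun t _ _ => ha t
  rw [sum_range_add] at hmono
  linarith

lemma vecMul_pow_of_vecMul_eq {n R : Type*} [Fintype n] [DecidableEq n] [Semiring R]
    {P : Matrix n n R} {π : n → R} (hπ : π ᵥ* P = π) (t : ℕ) : π ᵥ* P ^ t = π := by
  induction t with
  | zero => simp
  | succ t ih => rw [pow_succ, ← vecMul_vecMul, ih, hπ]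

section Markov

variable {V : Type*} [Fintype V] [DecidableEq V] {P : Matrix V V ℝ} {π : V → ℝ}

/-- Twice the total variation distance `D_tv(P^t_{u,·}, π)`. -/
def l1Dev (P : Matrix V V ℝ) (π : V → ℝ) (t : ℕ) (u : V) : ℝ := ∑ v, |(P ^ t) u v - π v|

/-- `τ(1/4)`. An empty set of admissible times would make `sInf` the junk value `0`. -/
noncomputable def mixingTime (P : Matrix V V ℝ) (π : V → ℝ) : ℕ :=
  univ.sup fun u => sInf {t : ℕ | (1 / 2) * l1Dev P π t u ≤ 1 / 4}

lemma l1Dev_nonneg (t : ℕ) (u : V) : 0 ≤ l1Dev P π t u :=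
  sum_nonneg fun _ _ => abs_nonneg _

lemma l1Dev_le_two (hP : P ∈ rowStochastic ℝ V) (hπ0 : ∀ v, 0 ≤ π v) (hπ1 : ∑ v, π v = 1)
    (t : ℕ) (u : V) : l1Dev P π t u ≤ 2 := by
  have hPt := pow_mem hP t
  calc l1Dev P π t u ≤ ∑ v, ((P ^ t) u v + π v) := by
        refine sum_le_sum fun v _ => (abs_sub _ _).trans_eq ?_
        rw [abs_of_nonneg (nonneg_of_mem_rowStochastic hPt), abs_of_nonneg (hπ0 v)]
    _ = 2 := by rw [sum_add_distrib, sum_row_of_mem_rowStochastic hPt, hπ1]; norm_num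

lemma sum_pow_apply_sub_eq_zero (hP : P ∈ rowStochastic ℝ V) (hπ1 : ∑ v, π v = 1)
    (t : ℕ) (u : V) : ∑ v, ((P ^ t) u v - π v) = 0 := by
  rw [sum_sub_distrib, sum_row_of_mem_rowStochastic (pow_mem hP t), hπ1, sub_self]

lemma l1Dev_add_le (hP : P ∈ rowStochastic ℝ V) (hπ1 : ∑ v, π v = 1) (hπ : π ᵥ* P = π)
    {t : ℕ} {c : V → ℝ} {r : ℝ} (hr : ∀ x, ∑ w, |(P ^ t) x w - c w| ≤ r) (s : ℕ) (u : V) :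
    l1Dev P π (s + t) u ≤ r * l1Dev P π s u := by
  have hrow : ((P ^ s) u - π) ᵥ* P ^ t = (P ^ (s + t)) u - π := by
    rw [sub_vecMul, vecMul_pow_of_vecMul_eq hπ, pow_add]
    rfl
  have h := sum_abs_vecMul_le_of_sum_eq_zero (d := (P ^ s) u - π)
    (sum_pow_apply_sub_eq_zero hP hπ1 s u) (P ^ t) c hr
  rwa [hrow] at h

lemma l1Dev_antitone (hP : P ∈ rowStochastic ℝ V) (hπ1 : ∑ v, π v = 1) (hπ : π ᵥ* P = π)
    (u : V) : Antitone fun t => l1Dev P π t u := by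
  have hrow : ∀ x, ∑ w, |(P ^ 1) x w - 0| ≤ 1 := fun x => by
    simp only [pow_one, sub_zero, abs_of_nonneg (nonneg_of_mem_rowStochastic hP),
      sum_row_of_mem_rowStochastic hP, le_refl]
  exact antitone_nat_of_succ_le fun s => by
    simpa only [one_mul] using l1Dev_add_le hP hπ1 hπ (c := 0) hrow s u

lemma sum_abs_sub_smul_eq_of_le {A : Matrix V V ℝ} (hA : A ∈ rowStochastic ℝ V)
    (hπ1 : ∑ v, π v = 1) {δ : ℝ} {x : V} (hδ : ∀ w, δ * π w ≤ A x w) :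
    ∑ w, |A x w - δ * π w| = 1 - δ := by
  rw [sum_congr rfl fun w _ => abs_of_nonneg (sub_nonneg.2 (hδ w)), sum_sub_distrib,
    sum_row_of_mem_rowStochastic hA, ← mul_sum, hπ1, mul_one]

lemma l1Dev_mul_le_of_minorization (hP : P ∈ rowStochastic ℝ V) (hπ1 : ∑ v, π v = 1)
    (hπ : π ᵥ* P = π) {t₀ : ℕ} {δ : ℝ} (hδ : ∀ x w, δ * π w ≤ (P ^ t₀) x w) (m : ℕ) (u : V) :
    l1Dev P π (t₀ * m) u ≤ (1 - δ) ^ m * l1Dev P π 0 u := by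
  have hcontr : ∀ x, ∑ w, |(P ^ t₀) x w - δ * π w| ≤ 1 - δ := fun x =>
    (sum_abs_sub_smul_eq_of_le (pow_mem hP t₀) hπ1 (hδ x)).le
  have hδ1 : 0 ≤ 1 - δ :=
    (sum_abs_sub_smul_eq_of_le (pow_mem hP t₀) hπ1 (hδ u)) ▸ sum_nonneg fun _ _ => abs_nonneg _
  induction m with
  | zero => simp
  | succ m ih =>
    calc l1Dev P π (t₀ * m + t₀) u ≤ (1 - δ) * l1Dev P π (t₀ * m) u :=
          l1Dev_add_le hP hπ1 hπ hcontr _ u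
      _ ≤ (1 - δ) * ((1 - δ) ^ m * l1Dev P π 0 u) := by gcongr
      _ = (1 - δ) ^ (m + 1) * l1Dev P π 0 u := by ring

lemma exists_forall_l1Dev_le (hP : P ∈ rowStochastic ℝ V) (hπ0 : ∀ v, 0 ≤ π v)
    (hπ1 : ∑ v, π v = 1) (hπ : π ᵥ* P = π) (herg : ∃ t₀ : ℕ, ∀ u v, 0 < (P ^ t₀) u v)
    {ε : ℝ} (hε : 0 < ε) : ∃ t, ∀ u, l1Dev P π t u ≤ ε := by
  obtain ⟨t₀, ht₀⟩ := herg
  rcases isEmpty_or_nonempty V with hV | hV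
  · exact ⟨0, isEmptyElim⟩
  obtain ⟨⟨x₀, w₀⟩, hmin⟩ := Finite.exists_min fun p : V × V => (P ^ t₀) p.1 p.2
  set δ := (P ^ t₀) x₀ w₀
  have hπ_le_one : ∀ w, π w ≤ 1 := fun w =>
    hπ1 ▸ single_le_sum (fun v _ => hπ0 v) (mem_univ w)
  have hδ : ∀ x w, δ * π w ≤ (P ^ t₀) x w := fun x w =>
    (mul_le_of_le_one_right (ht₀ x₀ w₀).le (hπ_le_one w)).trans (hmin (x, w))
  obtain ⟨m, hm⟩ := exists_pow_lt_of_lt_one (half_pos hε) (sub_lt_self 1 (ht₀ x₀ w₀))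
  refine ⟨t₀ * m, fun u => ?_⟩
  calc l1Dev P π (t₀ * m) u ≤ (1 - δ) ^ m * l1Dev P π 0 u :=
        l1Dev_mul_le_of_minorization hP hπ1 hπ hδ m u
    _ ≤ ε / 2 * 2 :=
        mul_le_mul hm.le (l1Dev_le_two hP hπ0 hπ1 0 u) (l1Dev_nonneg 0 u) (half_pos hε).le
    _ = ε := by ring

lemma l1Dev_mixingTime_le (hP : P ∈ rowStochastic ℝ V) (hπ1 : ∑ v, π v = 1)
    (hπ : π ᵥ* P = π) (hex : ∃ t, ∀ u, l1Dev P π t u ≤ 1 / 2) (u : V) :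
    l1Dev P π (mixingTime P π) u ≤ 1 / 2 := by
  obtain ⟨t, ht⟩ := hex
  have hmem := Nat.sInf_mem (s := {t : ℕ | (1 / 2) * l1Dev P π t u ≤ 1 / 4})
    ⟨t, by simp only [Set.mem_ofPred_eq]; linarith [ht u]⟩
  have hle : sInf {t : ℕ | (1 / 2) * l1Dev P π t u ≤ 1 / 4} ≤ mixingTime P π :=
    le_sup (f := fun u => sInf {t : ℕ | (1 / 2) * l1Dev P π t u ≤ 1 / 4}) (mem_univ u)
  simp only [Set.mem_ofPred_eq] at hmem
  linarith [l1Dev_antitone hP hπ1 hπ u hle]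

lemma sum_range_l1Dev_le (hP : P ∈ rowStochastic ℝ V) (hπ0 : ∀ v, 0 ≤ π v)
    (hπ1 : ∑ v, π v = 1) (hπ : π ᵥ* P = π) {τ : ℕ} (hτ : ∀ u, l1Dev P π τ u ≤ 1 / 2)
    (T : ℕ) (u : V) : ∑ t ∈ range T, l1Dev P π t u ≤ 3 * τ := by
  have hhalf : ∀ s, l1Dev P π (τ + s) u ≤ l1Dev P π s u / 2 := fun s => by
    rw [add_comm, div_eq_inv_mul, ← one_div]
    exact l1Dev_add_le hP hπ1 hπ hτ s u
  have hhead : ∑ t ∈ range τ, l1Dev P π t u ≤ 2 * τ := by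
    simpa [mul_comm] using
      sum_le_card_nsmul (range τ) (l1Dev P π · u) 2 fun t _ => l1Dev_le_two hP hπ0 hπ1 t u
  have htail : ∑ t ∈ range T, l1Dev P π (τ + t) u ≤ 2 * τ * (1 / 2) :=
    sum_range_le_of_add_le_half (fun t => l1Dev_nonneg _ u)
      (fun t _ => (l1Dev_antitone hP hπ1 hπ u (Nat.le_add_right τ t)).trans (hτ u))
      (fun t => hhalf (τ + t)) T
  have hmono : ∑ t ∈ range T, l1Dev P π t u ≤ ∑ t ∈ range (τ + T), l1Dev P π t u :=
    sum_le_sum_of_subset_of_nonneg (range_mono (Nat.le_add_left T τ))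
      fun t _ _ => l1Dev_nonneg t u
  rw [sum_range_add] at hmono
  linarith

lemma abs_sum_range_pow_apply_sub_le (hP : P ∈ rowStochastic ℝ V) (hπ0 : ∀ v, 0 ≤ π v)
    (hπ1 : ∑ v, π v = 1) (hπ : π ᵥ* P = π) {τ : ℕ} (hτ : ∀ u, l1Dev P π τ u ≤ 1 / 2)
    (T : ℕ) (u w : V) : |∑ t ∈ range T, ((P ^ t) u w - π w)| ≤ 3 / 2 * τ := by
  calc |∑ t ∈ range T, ((P ^ t) u w - π w)| ≤ ∑ t ∈ range T, l1Dev P π t u / 2 :=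
        (abs_sum_le_sum_abs _ _).trans <| sum_le_sum fun t _ =>
          abs_le_half_sum_abs_of_sum_eq_zero (sum_pow_apply_sub_eq_zero hP hπ1 t u) w
    _ ≤ 3 * τ / 2 := by rw [← sum_div]; gcongr; exact sum_range_l1Dev_le hP hπ0 hπ1 hπ hτ T u
    _ = 3 / 2 * τ := by ring

end Markov

theorem cumulative_expected_visits_bound_general {V : Type*} [Fintype V] [DecidableEq V]
    (P : Matrix V V ℝ) (π : V → ℝ)
    (hP0 : ∀ u v, 0 ≤ P u v) (hP1 : ∀ u, ∑ v, P u v = 1)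
    (herg : ∃ t0 : ℕ, ∀ u v, 0 < (P ^ t0) u v)
    (hπ0 : ∀ v, 0 ≤ π v) (hπ1 : ∑ v, π v = 1)
    (hstat : ∀ v, ∑ u, π u * P u v = π v)
    (tstar : ℕ)
    (htstar : tstar = univ.sup fun u =>
      sInf {t : ℕ | (1 / 2) * ∑ v, |(P ^ t) u v - π v| ≤ (1 / 4 : ℝ)})
    (μ0 : V → ℝ) (hμ0 : ∀ v, 0 ≤ μ0 v)
    (k : ℝ) (hk : ∑ v, μ0 v = k)
    (w : V) (T : ℕ) :
    |(∑ t ∈ range T, ∑ u, μ0 u * (P ^ t) u w) - k * T * π w| ≤ (3 / 2) * k * tstar := by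
  have hP : P ∈ rowStochastic ℝ V := mem_rowStochastic_iff_sum.2 ⟨hP0, hP1⟩
  have hπ : π ᵥ* P = π := funext hstat
  have hmix : ∀ u, l1Dev P π tstar u ≤ 1 / 2 := htstar ▸
    l1Dev_mixingTime_le hP hπ1 hπ (exists_forall_l1Dev_le hP hπ0 hπ1 hπ herg one_half_pos)
  have hdecomp : (∑ t ∈ range T, ∑ u, μ0 u * (P ^ t) u w) - k * T * π w
      = ∑ u, μ0 u * ∑ t ∈ range T, ((P ^ t) u w - π w) := by
    rw [← hk, sum_mul, sum_mul, sum_comm, ← sum_sub_distrib]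
    refine sum_congr rfl fun u _ => ?_
    rw [sum_sub_distrib, sum_const, card_range, nsmul_eq_mul, mul_sub, mul_sum]
    ring
  calc |(∑ t ∈ range T, ∑ u, μ0 u * (P ^ t) u w) - k * T * π w|
      ≤ ∑ u, μ0 u * (3 / 2 * tstar) := by
        rw [hdecomp]
        refine (abs_sum_le_sum_abs _ _).trans (sum_le_sum fun u _ => ?_)
        rw [abs_mul, abs_of_nonneg (hμ0 u)]
        exact mul_le_mul_of_nonneg_left
          (abs_sum_range_pow_apply_sub_le hP hπ0 hπ1 hπ hmix T u w) (hμ0 u)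
    _ = 3 / 2 * k * tstar := by rw [← sum_mul, hk]; ring

/-- For an ergodic chain `P` with stationary distribution `π` and initial mass `k`,
`|Σ_{t=0}^{T−1} (μ^{(0)}P^t)_w − kTπ_w| ≤ (3/2) k t*`. -/
theorem cumulative_expected_visits_bound {V : Type*} [Fintype V] [DecidableEq V] [Nonempty V]
    (P : Matrix V V ℝ) (π : V → ℝ)
    (hP0 : ∀ u v, 0 ≤ P u v) (hP1 : ∀ u, ∑ v, P u v = 1)
    (herg : ∃ t0 : ℕ, ∀ u v, 0 < (P ^ t0) u v)
    (hπ0 : ∀ v, 0 ≤ π v) (hπ1 : ∑ v, π v = 1)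
    (hstat : ∀ v, ∑ u, π u * P u v = π v)
    (tstar : ℕ)
    (htstar : tstar = univ.sup fun u =>
      sInf {t : ℕ | (1 / 2) * ∑ v, |(P ^ t) u v - π v| ≤ (1 / 4 : ℝ)})
    (μ0 : V → ℝ) (hμ0 : ∀ v, 0 ≤ μ0 v)
    (k : ℝ) (hk : ∑ v, μ0 v = k)
    (w : V) (T : ℕ) (hT : 0 < T) :
    |(∑ t ∈ range T, ∑ u, μ0 u * (P ^ t) u w) - k * T * π w| ≤ (3 / 2) * k * tstar :=
  cumulative_expected_visits_bound_general P π hP0 hP1 herg hπ0 hπ1 hstat tstar htstar μ0 hμ0 k hk w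
    T
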